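/- arXiv:1512.02873 — 2 statements merged into one kernel-verified Lean document; each statement's English description precedes it below -/
import Mathlib

section
/- Suppose μ : ℝ^N → ℝ is continuously differentiable and coercive (μ(α) → ∞ as ‖α‖ → ∞), and μ has two distinct strict local minima α₁ and α₂. Then μ possesses a third critical point α₃ distinct from α₁ and α₂ satisfying μ(α₃) > max(μ(α₁), μ(α₂)). -/
/-!
Say `μ α₁ ≤ μ α₂ = m` and suppose every critical point lies at level `≤ m`. Since `α₂` is a strict
local minimum, `μ` exceeds some `c > m` on a small sphere around `α₂`, so every connected set
joining `α₁` to `α₂` reaches level `c`. Pick `m < a < b < c`. By coercivity the band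
`{a ≤ μ ≤ L}` is compact and free of critical points, so `‖∇μ‖ ≥ σ > 0` there; a gradient step
with step length cut off to vanish below `a` then fixes `α₁, α₂`, never increases `μ`, and lowers
it by a fixed amount above `b`. Finitely many steps push a closed ball containing both minima
into `{μ ≤ b}`, giving a connected set joining them below level `c`: a contradiction.
-/

open Set Metric Filter Topology InnerProductSpace
open scoped Gradient

theorem isCompact_setOf_le_of_tendsto_cocompact {X : Type*} [TopologicalSpace X] {f : X → ℝ}
    (hf : Continuous f) (hco : Tendsto f (cocompact X) atTop) (t : ℝ) :
    IsCompact {x | f x ≤ t} := by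
  obtain ⟨K, hK, hKt⟩ := mem_cocompact.1 (hco.eventually_gt_atTop t)
  exact hK.of_isClosed_subset (isClosed_le hf continuous_const)
    fun x (hx : f x ≤ t) => by_contra fun hxK => (hKt hxK).not_ge hx

theorem exists_gt_forall_isPreconnected_exists_le {E : Type*} [MetricSpace E] [ProperSpace E]
    {f : E → ℝ} (hf : Continuous f) {x₁ x₂ : E} (hne : x₁ ≠ x₂)
    (hmin : ∀ᶠ y in 𝓝[≠] x₂, f x₂ < f y) :
    ∃ c, f x₂ < c ∧ ∀ C : Set E, IsPreconnected C → x₁ ∈ C → x₂ ∈ C → ∃ y ∈ C, c ≤ f y := by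
  obtain ⟨ρ, hρ, hball⟩ := nhdsWithin_basis_ball.eventually_iff.1 hmin
  set r := min (ρ / 2) (dist x₁ x₂)
  have hr : 0 < r := lt_min (half_pos hρ) (dist_pos.2 hne)
  obtain ⟨c, hc, hcS⟩ := (isCompact_sphere x₂ r).exists_forall_le' hf.continuousOn
    fun y hy => hball ⟨mem_ball.2 ((mem_sphere.1 hy).trans_lt ((min_le_left _ _).trans_lt
      (half_lt_self hρ))), ne_of_mem_sphere hy hr.ne'⟩
  refine ⟨c, hc, fun C hC h₁ h₂ => ?_⟩
  -- a preconnected set joining `x₂` to `x₁` crosses the sphere of radius `r` around `x₂`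
  obtain ⟨y, hyC, hy⟩ :=
    hC.intermediate_value h₂ h₁ (continuous_id.dist continuous_const).continuousOn
      ⟨(dist_self x₂).trans_le hr.le, min_le_right _ _⟩
  exact ⟨y, hyC, hcS y (mem_sphere.2 hy)⟩

theorem IsCompact.exists_forall_norm_sub_sub_fderiv_le {E G : Type*} [NormedAddCommGroup E]
    [NormedSpace ℝ E] [NormedAddCommGroup G] [NormedSpace ℝ G] {f : E → G} (hf : ContDiff ℝ 1 f)
    {K : Set E} (hK : IsCompact K) {ε : ℝ} (hε : 0 < ε) :
    ∃ η > 0, ∀ x ∈ K, ∀ y, dist y x < η → ‖f y - f x - fderiv ℝ f x (y - x)‖ ≤ ε * ‖y - x‖ := by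
  obtain ⟨η, hη, hclose⟩ := mem_uniformity_dist.1 <|
    hK.uniformContinuousAt_of_continuousAt (fderiv ℝ f)
      (fun x _ => (hf.continuous_fderiv one_ne_zero).continuousAt) (dist_mem_uniformity hε)
  refine ⟨η, hη, fun x hx y hy => ?_⟩
  refine (convex_ball x η).norm_image_sub_le_of_norm_fderiv_le'
    (fun z _ => hf.differentiable one_ne_zero z) (fun z hz => ?_) (mem_ball_self hη) (mem_ball.2 hy)
  rw [← dist_eq_norm, dist_comm]
  exact (hclose (mem_ball'.1 hz) hx).le

theorem apply_sub_smul_gradient_le {F : Type*} [NormedAddCommGroup F] [InnerProductSpace ℝ F]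
    [CompleteSpace F] {f : F → ℝ} {x : F} {ε η c : ℝ} (hε : 2 * ε ≤ ‖∇ f x‖)
    (hη : ∀ y, dist y x < η → ‖f y - f x - fderiv ℝ f x (y - x)‖ ≤ ε * ‖y - x‖)
    (hc : 0 ≤ c) (hcη : c * ‖∇ f x‖ < η) :
    f (x - c • ∇ f x) ≤ f x - c * ‖∇ f x‖ ^ 2 / 2 := by
  set v := ∇ f x
  have hstep : x - c • v - x = -(c • v) := by abel
  have hnorm : ‖-(c • v)‖ = c * ‖v‖ := by rw [norm_neg, norm_smul, Real.norm_of_nonneg hc]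
  have hlin : fderiv ℝ f x (-(c • v)) = -(c * ‖v‖ ^ 2) := by
    rw [← toDual_gradient, map_neg, map_smul, toDual_apply_apply, real_inner_self_eq_norm_sq,
      smul_eq_mul]
  have htaylor := hη _ (by rwa [dist_eq_norm, hstep, hnorm])
  rw [hstep, hlin, hnorm, Real.norm_eq_abs] at htaylor
  have := mul_le_mul_of_nonneg_right hε (mul_nonneg hc (norm_nonneg v))
  linarith [le_abs_self (f (x - c • v) - f x - -(c * ‖v‖ ^ 2))]

theorem exists_iterate_le {X : Type*} {g : X → X} {f : X → ℝ} {L b s : ℝ} (hs : 0 < s)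
    (hg : ∀ x, f x ≤ L → f (g x) ≤ f x ∧ (b ≤ f x → f (g x) ≤ f x - s)) :
    ∃ n : ℕ, ∀ x, f x ≤ L → f (g^[n] x) ≤ b := by
  have key : ∀ n : ℕ, ∀ x, f x ≤ L → f (g^[n] x) ≤ f x ∧ f (g^[n] x) ≤ max (f x - n * s) b := by
    intro n x hx
    induction n with
    | zero => simp
    | succ n ih =>
      obtain ⟨hle, hmax⟩ := ih
      obtain ⟨hdec, hdrop⟩ := hg _ (hle.trans hx)
      rw [Function.iterate_succ_apply']
      refine ⟨hdec.trans hle, ?_⟩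
      rcases lt_or_ge (f (g^[n] x)) b with hlt | hge
      · exact le_max_of_le_right (hdec.trans hlt.le)
      · rcases le_max_iff.1 hmax with h | h
        · exact le_max_of_le_left (by push_cast; linarith [hdrop hge])
        · exact le_max_of_le_right (by linarith [hdrop hge])
  obtain ⟨n, hn⟩ := exists_nat_ge ((L - b) / s)
  rw [div_le_iff₀ hs] at hn
  exact ⟨n, fun x hx => (key n x hx).2.trans (max_le (by linarith) le_rfl)⟩

theorem exists_deformation_of_fderiv_ne_zero {F : Type*} [NormedAddCommGroup F]
    [InnerProductSpace ℝ F] [CompleteSpace F] {f : F → ℝ} (hf : ContDiff ℝ 1 f) {a b L : ℝ}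
    (hab : a < b) (hK : IsCompact {x | f x ≤ L})
    (hcrit : ∀ x, a ≤ f x → f x ≤ L → fderiv ℝ f x ≠ 0) :
    ∃ g : F → F, Continuous g ∧ (∀ x, f x ≤ a → g x = x) ∧ ∀ x, f x ≤ L → f (g x) ≤ b := by
  have hgrad : Continuous (∇ f) :=
    (toDual ℝ F).symm.continuous.comp (hf.continuous_fderiv one_ne_zero)
  obtain ⟨σ, hσ, hσle⟩ :=
    (hK.inter_right (isClosed_le continuous_const hf.continuous)).exists_forall_le'
      hgrad.norm.continuousOn fun x hx => norm_pos_iff.2 fun h0 =>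
        hcrit x hx.2 hx.1 (by rw [← toDual_gradient, h0, map_zero])
  obtain ⟨M, hM, hgradM⟩ :=
    (hK.image_of_continuousOn hgrad.continuousOn).isBounded.exists_pos_norm_le
  obtain ⟨η, hη, htaylor⟩ := hK.exists_forall_norm_sub_sub_fderiv_le hf (half_pos hσ)
  set h := min (b - a) (η / (2 * M))
  have hh : 0 < h := lt_min (sub_pos.2 hab) (by positivity)
  have hhM : h * M < η := by
    calc h * M ≤ η / (2 * M) * M := by gcongr; exact min_le_right _ _
      _ < η := by field_simp; linarith
  -- the step length vanishes below level `a` and equals `h` above level `b`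
  set g₀ : F → F := fun x => x - min h (max 0 (f x - a)) • ∇ f x
  have hstep : ∀ x, f x ≤ L →
      f (g₀ x) ≤ f x ∧ (b ≤ f x → f (g₀ x) ≤ f x - h * σ ^ 2 / 2) := by
    intro x hx
    rcases le_or_gt (f x) a with hxa | hax
    · have hfix : g₀ x = x := by simp [g₀, hxa, hh.le]
      exact ⟨(congrArg f hfix).le, fun hbx => absurd (hab.trans_le hbx) hxa.not_gt⟩
    set c := min h (max 0 (f x - a))
    have hc : 0 ≤ c := le_min hh.le (le_max_left _ _)
    have hσx : σ ≤ ‖∇ f x‖ := hσle x ⟨hx, hax.le⟩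
    have hdesc : f (g₀ x) ≤ f x - c * ‖∇ f x‖ ^ 2 / 2 :=
      apply_sub_smul_gradient_le (by linarith) (htaylor x hx) hc <|
        calc c * ‖∇ f x‖ ≤ h * M := by
              gcongr; exacts [min_le_left _ _, hgradM _ (mem_image_of_mem _ hx)]
          _ < η := hhM
    refine ⟨by nlinarith [norm_nonneg (∇ f x)], fun hbx => ?_⟩
    have hch : c = h := min_eq_left (le_max_of_le_right (min_le_left _ _ |>.trans (by linarith)))
    rw [hch] at hdesc
    nlinarith [mul_le_mul hσx hσx hσ.le (norm_nonneg _)]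
  obtain ⟨n, hn⟩ := exists_iterate_le (by positivity) hstep
  refine ⟨g₀^[n], Continuous.iterate ?_ n,
    fun x hx => Function.iterate_fixed (by simp [g₀, hx, hh.le]) n, hn⟩
  have := hf.continuous
  fun_prop

theorem exists_fderiv_eq_zero_gt_of_strictLocalMin {F : Type*} [NormedAddCommGroup F]
    [InnerProductSpace ℝ F] [FiniteDimensional ℝ F] {f : F → ℝ} (hf : ContDiff ℝ 1 f)
    (hco : Tendsto f (cocompact F) atTop) {x₁ x₂ : F} (hne : x₁ ≠ x₂)
    (hmin : ∀ᶠ y in 𝓝[≠] x₂, f x₂ < f y) (hle : f x₁ ≤ f x₂) :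
    ∃ x₃, fderiv ℝ f x₃ = 0 ∧ f x₂ < f x₃ := by
  by_contra! hcrit
  obtain ⟨c, hc, hridge⟩ := exists_gt_forall_isPreconnected_exists_le hf.continuous hne hmin
  obtain ⟨b, hb, hbc⟩ := exists_between hc
  obtain ⟨a, ha, hab⟩ := exists_between hb
  set B := closedBall x₁ (dist x₂ x₁)
  obtain ⟨L, hL⟩ := (isCompact_closedBall x₁ (dist x₂ x₁)).bddAbove_image hf.continuous.continuousOn
  obtain ⟨g, hg, hfix, hdown⟩ := exists_deformation_of_fderiv_ne_zero hf hab
    (isCompact_setOf_le_of_tendsto_cocompact hf.continuous hco L)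
    fun x hax _ h0 => (hcrit x h0).not_gt (ha.trans_le hax)
  obtain ⟨_, ⟨x, hxB, rfl⟩, hx⟩ := hridge (g '' B)
    ((convex_closedBall _ _).isPreconnected.image g hg.continuousOn)
    ⟨x₁, mem_closedBall_self dist_nonneg, hfix x₁ (hle.trans ha.le)⟩
    ⟨x₂, mem_closedBall.2 le_rfl, hfix x₂ ha.le⟩
  exact (hdown x (hL ⟨x, hxB, rfl⟩)).not_gt (hbc.trans_le hx)

theorem stmt_4 {N : ℕ} (μ : EuclideanSpace ℝ (Fin N) → ℝ)
    (hμ : ContDiff ℝ 1 μ)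
    (hcoercive : Filter.Tendsto μ (Filter.cocompact _) Filter.atTop)
    (α₁ α₂ : EuclideanSpace ℝ (Fin N)) (hne : α₁ ≠ α₂)
    (hmin₁ : ∀ᶠ β in nhdsWithin α₁ {α₁}ᶜ, μ α₁ < μ β)
    (hmin₂ : ∀ᶠ β in nhdsWithin α₂ {α₂}ᶜ, μ α₂ < μ β) :
    ∃ α₃, α₃ ≠ α₁ ∧ α₃ ≠ α₂ ∧ fderiv ℝ μ α₃ = 0 ∧
      max (μ α₁) (μ α₂) < μ α₃ := by
  rcases le_total (μ α₁) (μ α₂) with hle | hle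
  · obtain ⟨α₃, hcrit, hgt⟩ :=
      exists_fderiv_eq_zero_gt_of_strictLocalMin hμ hcoercive hne hmin₂ hle
    refine ⟨α₃, ?_, ?_, hcrit, max_lt (hle.trans_lt hgt) hgt⟩ <;> rintro rfl <;> linarith
  · obtain ⟨α₃, hcrit, hgt⟩ :=
      exists_fderiv_eq_zero_gt_of_strictLocalMin hμ hcoercive hne.symm hmin₁ hle
    refine ⟨α₃, ?_, ?_, hcrit, max_lt hgt (hle.trans_lt hgt)⟩ <;> rintro rfl <;> linarith
end

section
/- Let W : ℝ^N → ℝ^N be C² such that μ(α) = (1/2)‖W(α)‖² is coercive and the Jacobian J(α) is nonsingular for all α ∈ ℝ^N. Then W has exactly one root, i.e. there exists a unique α* with W(α*) = 0. -/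
/-!
At a global minimum of the coercive function μ its gradient `Jᵀ W` vanishes, so `W = 0` there
because `J` is invertible. For uniqueness, coercivity makes `W` proper and the invertible Jacobian
makes it a local homeomorphism, so `W` is a covering map of `ℝ^N`. As `ℝ^N` is simply connected,
the identity lifts to a continuous section `s` of `W`, and `s ∘ W = id` by uniqueness of lifts of
`W` itself; hence `W` is injective.
-/

open Filter Function Topology

theorem Filter.Tendsto.cocompact_of_comp_atTop {X Y : Type*} [TopologicalSpace Y] {f : X → Y}
    {g : Y → ℝ} {l : Filter X} (hg : Continuous g) (h : Tendsto (g ∘ f) l atTop) :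
    Tendsto f l (cocompact Y) := by
  refine hasBasis_cocompact.tendsto_right_iff.mpr fun K hK => ?_
  obtain ⟨R, hR⟩ := (hK.image hg).bddAbove
  filter_upwards [h.eventually_gt_atTop R] with x hx hxK
  exact hx.not_ge (hR ⟨f x, hxK, rfl⟩)

theorem IsLocalHomeomorph.isCoveringMap_of_isProperMap {E X : Type*} [TopologicalSpace E]
    [TopologicalSpace X] [T2Space E] {f : E → X} (hf : IsLocalHomeomorph f)
    (hp : IsProperMap f) : IsCoveringMap f := by
  have hchart : ∀ e, ∃ φ : OpenPartialHomeomorph E X, e ∈ φ.source ∧ φ = f :=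
    fun e => (hf e).imp fun _ h => ⟨h.1, h.2.symm⟩
  refine isCoveringMap_iff_isCoveringMapOn_univ.mpr
    (hp.isClosedMap.isCoveringMapOn_of_isLocalHomeomorphOn (fun x _ => ?_)
      (isLocalHomeomorph_iff_isLocalHomeomorphOn_univ.mp hf |>.mono (Set.subset_univ _)))
  exact (hp.isCompact_preimage isCompact_singleton).finite
    (.of_openPartialHomeomorph f subset_rfl fun e _ => hchart e)

theorem IsCoveringMap.injective_of_simplyConnectedSpace {E X : Type*} [TopologicalSpace E]
    [TopologicalSpace X] [SimplyConnectedSpace E] [LocallyPathConnectedSpace E]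
    [SimplyConnectedSpace X] [LocallyPathConnectedSpace X] {p : E → X} (cov : IsCoveringMap p) :
    Injective p := by
  intro x y hxy
  obtain ⟨s, ⟨hsx, hs⟩, -⟩ := cov.existsUnique_continuousMap_lifts (.id X) (p x) x rfl
  obtain ⟨F, -, hlift⟩ := cov.existsUnique_continuousMap_lifts ⟨p, cov.continuous⟩ x x rfl
  have hsp : s.comp ⟨p, cov.continuous⟩ = .id E :=
    (hlift _ ⟨hsx, by ext e; exact congrFun hs (p e)⟩).trans (hlift _ ⟨rfl, rfl⟩).symm
  calc x = s (p y) := by rw [← hxy, hsx]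
    _ = y := DFunLike.congr_fun hsp y

theorem isLocalHomeomorph_of_contDiff_of_det_fderiv_ne_zero {𝕜 E : Type*} [RCLike 𝕜]
    [NormedAddCommGroup E] [NormedSpace 𝕜 E] [FiniteDimensional 𝕜 E] {f : E → E}
    {n : WithTop ℕ∞} (hf : ContDiff 𝕜 n f) (hn : n ≠ 0) (hdet : ∀ x, (fderiv 𝕜 f x).det ≠ 0) :
    IsLocalHomeomorph f := by
  have := FiniteDimensional.complete 𝕜 E
  refine .mk f fun x => ?_
  have hs : HasStrictFDerivAt f
      ((fderiv 𝕜 f x).toContinuousLinearEquivOfDetNeZero (hdet x) : E →L[𝕜] E) x := by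
    rw [ContinuousLinearMap.coe_toContinuousLinearEquivOfDetNeZero]
    exact hf.contDiffAt.hasStrictFDerivAt hn
  exact ⟨hs.toOpenPartialHomeomorph f, hs.mem_toOpenPartialHomeomorph_source,
    by rw [hs.toOpenPartialHomeomorph_coe]; exact Set.eqOn_refl _ _⟩

theorem toMatrix'_fderiv_apply {ι κ : Type*} [Fintype κ] [DecidableEq κ]
    {f : (κ → ℝ) → ι → ℝ} {x : κ → ℝ} (hf : DifferentiableAt ℝ f x) (i : ι) (j : κ) :
    LinearMap.toMatrix' (fderiv ℝ f x : (κ → ℝ) →ₗ[ℝ] ι → ℝ) i j =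
      fderiv ℝ (fun a => f a i) x (Pi.single j 1) := by
  rw [LinearMap.toMatrix'_apply, fderiv_pi (differentiableAt_pi.mp hf)]
  rfl

theorem eq_zero_of_isLocalMin_sum_sq {ι E : Type*} [Fintype ι] [NormedAddCommGroup E]
    [NormedSpace ℝ E] {f : E → ι → ℝ} {x : E} (hf : DifferentiableAt ℝ f x)
    (hsurj : Surjective (fderiv ℝ f x)) (hmin : IsLocalMin (fun a => ∑ i, f a i ^ 2) x) :
    f x = 0 := by
  have hderiv : HasFDerivAt (fun a => ∑ i, f a i ^ 2)
      (∑ i, (2 * f x i) • (ContinuousLinearMap.proj i).comp (fderiv ℝ f x)) x := by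
    refine HasFDerivAt.fun_sum fun i _ => ?_
    simpa using ((hasFDerivAt_apply i _).comp x hf.hasFDerivAt).pow 2
  obtain ⟨v, hv⟩ := hsurj (f x)
  have hsum : 2 * ∑ i, f x i ^ 2 = 0 := by
    simpa [hv, Finset.mul_sum, sq, mul_assoc] using
      DFunLike.congr_fun (hmin.hasFDerivAt_eq_zero hderiv) v
  have hsq := (Finset.sum_eq_zero_iff_of_nonneg fun i _ => sq_nonneg (f x i)).mp
    (by linarith)
  funext i
  simpa using hsq i (Finset.mem_univ i)

theorem stmt_5 {N : ℕ} (W : (Fin N → ℝ) → (Fin N → ℝ))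
    (hW : ContDiff ℝ 2 W)
    (J : (Fin N → ℝ) → Matrix (Fin N) (Fin N) ℝ)
    (hJ : ∀ α i j, J α i j = fderiv ℝ (fun a => W a i) α (Pi.single j 1))
    (μ : (Fin N → ℝ) → ℝ)
    (hμ : ∀ α, μ α = (1/2) * ∑ i, (W α i)^2)
    (hcoercive : Filter.Tendsto μ (Filter.cocompact _) Filter.atTop)
    (hdet : ∀ α, (J α).det ≠ 0) :
    ∃! αstar, W αstar = 0 := by
  have hdiff : Differentiable ℝ W := hW.differentiable (by norm_num)
  have hdet' (α) : (fderiv ℝ W α).det ≠ 0 := by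
    have hJα : J α = LinearMap.toMatrix' (fderiv ℝ W α) := by
      ext i j
      rw [hJ, toMatrix'_fderiv_apply (hdiff α)]
    rw [ContinuousLinearMap.det, ← LinearMap.det_toMatrix', ← hJα]
    exact hdet α
  have hμW : μ = (fun y => (1/2) * ∑ i, y i ^ 2) ∘ W := funext hμ
  have hg : Continuous fun y : Fin N → ℝ => (1/2) * ∑ i, y i ^ 2 := by fun_prop
  have hproper : IsProperMap W := isProperMap_iff_tendsto_cocompact.mpr
    ⟨hW.continuous, (hμW ▸ hcoercive).cocompact_of_comp_atTop hg⟩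
  have hcov : IsCoveringMap W :=
    (isLocalHomeomorph_of_contDiff_of_det_fderiv_ne_zero hW (by norm_num) hdet')
      |>.isCoveringMap_of_isProperMap hproper
  obtain ⟨α₀, hα₀⟩ := (hμW ▸ hg.comp hW.continuous : Continuous μ).exists_forall_le hcoercive
  have hroot : W α₀ = 0 := by
    refine eq_zero_of_isLocalMin_sum_sq (hdiff α₀) ?_ (Eventually.of_forall fun β => ?_)
    · rw [← ContinuousLinearMap.coe_toContinuousLinearEquivOfDetNeZero _ (hdet' α₀)]
      exact ContinuousLinearEquiv.surjective _
    · linarith [hα₀ β, hμ α₀, hμ β]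
  exact ⟨α₀, hroot, fun β hβ => hcov.injective_of_simplyConnectedSpace (hβ.trans hroot.symm)⟩
end
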